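/- In the ring R = F_2[h0, h1, v, w1]/(h0·h1, h1^3, h1·v, v^2 + h0^2·w1), the identities v^2 = h0^2·w1, v^3 = h0^2·v·w1, and v^4 = h0^4·w1^2 hold, and the element v·w1 is not in the subalgebra generated by h0, h1, w1. -/

import Mathlib

/-! The relation `v² + h₀²w₁` reads `v² = h₀²w₁` in characteristic 2, and the other two identities
are its multiple by `v` and its square. For the last claim, `h₀ ↦ 1, h₁ ↦ 0, v ↦ X, w₁ ↦ X²` kills
the relations, so it defines a map `R → F₂[X]` sending `h₀, h₁, w₁` into `F₂[X²]`, but `v·w₁` to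
`X³`. -/

noncomputable section

open MvPolynomial

abbrev F2 := ZMod 2

abbrev KOP := MvPolynomial (Fin 4) F2

def h0 : KOP := X 0
def h1 : KOP := X 1
def vP : KOP := X 2
def w1 : KOP := X 3

def koExtIdeal : Ideal KOP :=
  Ideal.span {h0 * h1, h1 ^ 3, h1 * vP, vP ^ 2 + h0 ^ 2 * w1}

/-- `R = F₂[h₀, h₁, v, w₁]/(h₀h₁, h₁³, h₁v, v² + h₀²w₁)`. -/
abbrev KOExt := KOP ⧸ koExtIdeal

def mkKO : KOP →+* KOExt := Ideal.Quotient.mk koExtIdeal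

theorem Polynomial.X_pow_notMem_adjoin_X_pow {R : Type*} [CommRing R] [Nontrivial R] {m k : ℕ}
    (hm : 0 < m) (hk : ¬ m ∣ k) :
    (Polynomial.X ^ k : Polynomial R) ∉ Algebra.adjoin R {Polynomial.X ^ m} := by
  rw [Algebra.adjoin_singleton_eq_range_aeval]
  rintro ⟨p, hp⟩
  have hexpand : Polynomial.expand R m p = Polynomial.X ^ k := by
    rwa [Polynomial.expand_eq_comp_X_pow, Polynomial.comp_eq_aeval]
  have := congrArg (Polynomial.coeff · k) hexpand
  simp [Polynomial.coeff_expand hm, hk] at this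

lemma mkKO_vP_sq : mkKO (vP ^ 2) = mkKO (h0 ^ 2 * w1) := by
  refine Ideal.Quotient.eq.mpr ?_
  rw [CharTwo.sub_eq_add]
  exact Ideal.subset_span (by simp)

def koTest : KOP →ₐ[F2] Polynomial F2 :=
  aeval ![1, 0, Polynomial.X, Polynomial.X ^ 2]

lemma koExtIdeal_le_ker_koTest : koExtIdeal ≤ RingHom.ker koTest := by
  simp only [koExtIdeal, Ideal.span_le, Set.insert_subset_iff, Set.singleton_subset_iff,
    SetLike.mem_coe, RingHom.mem_ker]
  simp [koTest, h0, h1, vP, w1, CharTwo.add_self_eq_zero]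

def koExtTest : KOExt →ₐ[F2] Polynomial F2 :=
  Ideal.Quotient.liftₐ koExtIdeal koTest fun _ ha => koExtIdeal_le_ker_koTest ha

lemma koExtTest_mkKO (a : KOP) : koExtTest (mkKO a) = koTest a := rfl

lemma adjoin_h0_h1_w1_le_comap_koExtTest :
    Algebra.adjoin F2 {mkKO h0, mkKO h1, mkKO w1} ≤
      (Algebra.adjoin F2 {(Polynomial.X : Polynomial F2) ^ 2}).comap koExtTest := by
  rw [Algebra.adjoin_le_iff]
  simp only [Set.insert_subset_iff, Set.singleton_subset_iff, SetLike.mem_coe,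
    Subalgebra.mem_comap]
  refine ⟨?_, ?_, Algebra.subset_adjoin ?_⟩ <;>
    simp [koExtTest_mkKO, koTest, h0, h1, w1]

lemma koExtTest_mkKO_vP_mul_w1 : koExtTest (mkKO (vP * w1)) = Polynomial.X ^ 3 := by
  simp [koExtTest_mkKO, koTest, vP, w1, pow_succ, mul_assoc]

/-- In `R` the identities `v² = h₀²w₁`, `v³ = h₀²vw₁`, `v⁴ = h₀⁴w₁²` hold, and
`v·w₁` is not in the subalgebra generated by `h₀, h₁, w₁`. -/
theorem koExt_v_identities :
    mkKO (vP ^ 2) = mkKO (h0 ^ 2 * w1) ∧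
    mkKO (vP ^ 3) = mkKO (h0 ^ 2 * vP * w1) ∧
    mkKO (vP ^ 4) = mkKO (h0 ^ 4 * w1 ^ 2) ∧
    mkKO (vP * w1) ∉ Algebra.adjoin F2 {mkKO h0, mkKO h1, mkKO w1} := by
  refine ⟨mkKO_vP_sq, ?_, ?_, fun h => ?_⟩
  · calc mkKO (vP ^ 3) = mkKO vP * mkKO (vP ^ 2) := by rw [← map_mul, pow_succ']
      _ = mkKO (h0 ^ 2 * vP * w1) := by rw [mkKO_vP_sq, ← map_mul]; congr 1; ring
  · calc mkKO (vP ^ 4) = mkKO (vP ^ 2) ^ 2 := by rw [← map_pow, ← pow_mul]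
      _ = mkKO (h0 ^ 4 * w1 ^ 2) := by rw [mkKO_vP_sq, ← map_pow]; congr 1; ring
  · have hX3 := adjoin_h0_h1_w1_le_comap_koExtTest h
    rw [Subalgebra.mem_comap, koExtTest_mkKO_vP_mul_w1] at hX3
    exact Polynomial.X_pow_notMem_adjoin_X_pow two_pos (by decide) hX3
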